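/- Let u' be an odometer on the integer interval [a,b] (vanishing outside [a,b]) that is weakly stable on [a,b] for a given initial configuration σ with no sleeping particles. Then the number of particles left on [a,b] by u', namely Σ_{v=a}^b h(v), equals Σ_{v=a}^b |σ(v)| − L_{u'}(a) − R_{u'}(b), and moreover the true odometer stabilizing [a,b] leaves at least as many particles on [a,b] as u' does. -/

import Mathlib

/-- ARW instructions. -/
inductive Instr : Type
  | left
  | right
  | sleep
deriving DecidableEq

/-- The state of a single site: a sleeping particle, or `n` active particles. -/
inductive SiteState : Type
  | sleeping
  | active (n : ℕ)
deriving DecidableEq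

/-- Adding one (active) particle to a site. -/
def addP : SiteState → SiteState
  | SiteState.sleeping => SiteState.active 2
  | SiteState.active n => SiteState.active (n + 1)

/-- Removing one particle from a site (only meaningful for active sites). -/
def removeP : SiteState → SiteState
  | SiteState.sleeping => SiteState.sleeping
  | SiteState.active n => SiteState.active (n - 1)

/-- The effect of executing instruction `ins` at site `v` on the configuration. -/
def applyInstr (c : ℤ → SiteState) (v : ℤ) : Instr → (ℤ → SiteState)
  | Instr.left => fun w =>
      if w = v then removeP (c v) else if w = v - 1 then addP (c w) else c w
  | Instr.right => fun w =>
      if w = v then removeP (c v) else if w = v + 1 then addP (c w) else c w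
  | Instr.sleep => fun w =>
      if w = v then (if c v = SiteState.active 1 then SiteState.sleeping else c v)
      else c w

/-- Running a toppling sequence (a list of sites) from a configuration and an
odometer: each toppling at `v` executes the next unexecuted instruction at `v`
and increments the odometer there. -/
def run (instr : ℤ → ℕ → Instr) :
    List ℤ → (ℤ → SiteState) × (ℤ → ℕ) → (ℤ → SiteState) × (ℤ → ℕ)
  | [], p => p
  | v :: l, p =>
      run instr l
        (applyInstr p.1 v (instr v (p.2 v + 1)), Function.update p.2 v (p.2 v + 1))

/-- A toppling sequence is legal if each toppled site has at least one active
particle at the time it is toppled. -/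
def Legal (instr : ℤ → ℕ → Instr) :
    List ℤ → (ℤ → SiteState) × (ℤ → ℕ) → Prop
  | [], _ => True
  | v :: l, p => (∃ m : ℕ, p.1 v = SiteState.active (m + 1)) ∧
      Legal instr l
        (applyInstr p.1 v (instr v (p.2 v + 1)), Function.update p.2 v (p.2 v + 1))

/-- A configuration is stable on `V` if every site of `V` holds either a single
sleeping particle or no particle. -/
def StableOn (c : ℤ → SiteState) (V : Finset ℤ) : Prop :=
  ∀ v ∈ V, c v = SiteState.sleeping ∨ c v = SiteState.active 0

/-- The number of `left` instructions among the first `u v` instructions at `v`. -/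
def Lcount (instr : ℤ → ℕ → Instr) (u : ℤ → ℕ) (v : ℤ) : ℕ :=
  ((Finset.Icc 1 (u v)).filter fun i => instr v i = Instr.left).card

/-- The number of `right` instructions among the first `u v` instructions at `v`. -/
def Rcount (instr : ℤ → ℕ → Instr) (u : ℤ → ℕ) (v : ℤ) : ℕ :=
  ((Finset.Icc 1 (u v)).filter fun i => instr v i = Instr.right).card

/-- The number of particles left at `v` by the odometer `u`, starting from the
all-active configuration `σ`. -/
def height (instr : ℤ → ℕ → Instr) (σ : ℤ → ℕ) (u : ℤ → ℕ) (v : ℤ) : ℤ :=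
  (σ v : ℤ) + (Rcount instr u (v - 1) : ℤ) + (Lcount instr u (v + 1) : ℤ)
    - (Lcount instr u v : ℤ) - (Rcount instr u v : ℤ)

/-- Weak stability of the odometer `u` at `v`. -/
def WeaklyStableAt (instr : ℤ → ℕ → Instr) (σ : ℤ → ℕ) (u : ℤ → ℕ) (v : ℤ) : Prop :=
  (height instr σ u v = 0 ∨ height instr σ u v = 1) ∧
    (height instr σ u v = 1 → instr v (u v) = Instr.sleep)

/-!
The first claim is a telescoping sum: `h(v) = |σ(v)| + F(v+1) - F(v)` with
`F(v) = L(v) - R(v-1)` the net flow across the edge `{v-1, v}`, and `R(a-1) = L(b+1) = 0`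
since the odometer vanishes outside `[a,b]`. For the second, the configuration reached by a
legal toppling sequence is determined by its odometer, so a legal toppling at `v` cannot be one
`u'` has already used up: that would make `v` hold at most `h_{u'}(v) ≤ 1` particles, asleep if
there is one. Hence the true odometer `u` stays below `u'`, and `L_u(a) ≤ L_{u'}(a)`,
`R_u(b) ≤ R_{u'}(b)`.
-/

open Finset Function

theorem Nat.card_filter_Icc_one_add_one (p : ℕ → Prop) [DecidablePred p] (n : ℕ) :
    #{i ∈ Icc 1 (n + 1) | p i} = #{i ∈ Icc 1 n | p i} + if p (n + 1) then 1 else 0 := by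
  simp only [card_filter]
  exact sum_Icc_succ_top (by omega) _

theorem Int.sum_Ico_sub_telescope {M : Type*} [AddCommGroup M] (f : ℤ → M) {a c : ℤ}
    (hac : a ≤ c) : ∑ v ∈ Ico a c, (f (v + 1) - f v) = f c - f a := by
  induction c, hac using Int.leInduction with
  | base => simp
  | succ c hac ih =>
    rw [← insert_Ico_right_eq_Ico_add_one hac, sum_insert (by simp), ih]
    abel

section Odometer

variable {instr : ℤ → ℕ → Instr} {σ : ℤ → ℕ}

theorem Lcount_update_add_one (w : ℤ → ℕ) (v₀ v : ℤ) :
    Lcount instr (update w v₀ (w v₀ + 1)) v =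
      Lcount instr w v + if v = v₀ ∧ instr v₀ (w v₀ + 1) = .left then 1 else 0 := by
  by_cases hv : v = v₀
  · subst hv
    simp [Lcount, Nat.card_filter_Icc_one_add_one]
  · simp [Lcount, hv]

theorem Rcount_update_add_one (w : ℤ → ℕ) (v₀ v : ℤ) :
    Rcount instr (update w v₀ (w v₀ + 1)) v =
      Rcount instr w v + if v = v₀ ∧ instr v₀ (w v₀ + 1) = .right then 1 else 0 := by
  by_cases hv : v = v₀
  · subst hv
    simp [Rcount, Nat.card_filter_Icc_one_add_one]
  · simp [Rcount, hv]

theorem Lcount_mono {u w : ℤ → ℕ} {v : ℤ} (h : u v ≤ w v) :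
    Lcount instr u v ≤ Lcount instr w v :=
  card_le_card (filter_subset_filter _ (Icc_subset_Icc_right h))

theorem Rcount_mono {u w : ℤ → ℕ} {v : ℤ} (h : u v ≤ w v) :
    Rcount instr u v ≤ Rcount instr w v :=
  card_le_card (filter_subset_filter _ (Icc_subset_Icc_right h))

theorem Lcount_of_eq_zero {u : ℤ → ℕ} {v : ℤ} (h : u v = 0) : Lcount instr u v = 0 := by
  simp [Lcount, h]

theorem Rcount_of_eq_zero {u : ℤ → ℕ} {v : ℤ} (h : u v = 0) : Rcount instr u v = 0 := by
  simp [Rcount, h]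

theorem height_update_add_one (w : ℤ → ℕ) (v₀ v : ℤ) :
    height instr σ (update w v₀ (w v₀ + 1)) v = height instr σ w v
      + (if v - 1 = v₀ ∧ instr v₀ (w v₀ + 1) = .right then 1 else 0)
      + (if v + 1 = v₀ ∧ instr v₀ (w v₀ + 1) = .left then 1 else 0)
      - (if v = v₀ ∧ instr v₀ (w v₀ + 1) = .left then 1 else 0)
      - (if v = v₀ ∧ instr v₀ (w v₀ + 1) = .right then 1 else 0) := by
  simp only [height, Lcount_update_add_one, Rcount_update_add_one]
  push_cast
  ring

theorem height_le_height_of_le_of_eq {u w : ℤ → ℕ} (hle : w ≤ u) {v : ℤ} (heq : w v = u v) :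
    height instr σ w v ≤ height instr σ u v := by
  have hR := Rcount_mono (instr := instr) (hle (v - 1))
  have hL := Lcount_mono (instr := instr) (hle (v + 1))
  simp only [height, Lcount, Rcount, heq] at *
  omega

theorem height_eq_add_sub (u : ℤ → ℕ) (v : ℤ) :
    height instr σ u v = σ v + ((Lcount instr u (v + 1) - Rcount instr u (v + 1 - 1) : ℤ)
      - (Lcount instr u v - Rcount instr u (v - 1))) := by
  rw [height, add_sub_cancel_right]
  ring

theorem sum_height_Icc {u : ℤ → ℕ} {a b : ℤ} (hab : a ≤ b)
    (hsupp : ∀ v, v ∉ Icc a b → u v = 0) :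
    ∑ v ∈ Icc a b, height instr σ u v =
      ∑ v ∈ Icc a b, (σ v : ℤ) - Lcount instr u a - Rcount instr u b := by
  have hL : Lcount instr u (b + 1) = 0 := Lcount_of_eq_zero (hsupp _ (by simp))
  have hR : Rcount instr u (a - 1) = 0 := Rcount_of_eq_zero (hsupp _ (by simp))
  rw [sum_congr rfl fun v _ => height_eq_add_sub u v, sum_add_distrib, ← Ico_add_one_right_eq_Icc,
    Int.sum_Ico_sub_telescope (fun v => (Lcount instr u v - Rcount instr u (v - 1) : ℤ))
      (by omega)]
  simp only [add_sub_cancel_right, hL, hR]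
  push_cast
  ring

/-- The state of a site holding `h` particles whose last executed instruction is `ins`. -/
def siteState (h : ℤ) (ins : Instr) : SiteState :=
  if ins = .sleep ∧ h = 1 then .sleeping else .active h.toNat

theorem addP_siteState {h : ℤ} {ins : Instr} (h₀ : 0 ≤ h) (hs : ins = .sleep → 1 ≤ h) :
    addP (siteState h ins) = siteState (h + 1) ins := by
  by_cases hsl : ins = .sleep ∧ h = 1
  · obtain ⟨rfl, rfl⟩ := hsl
    rfl
  · have : ¬(ins = .sleep ∧ h + 1 = 1) := fun h' => by have := hs h'.1; omega
    simp only [siteState, if_neg hsl, if_neg this, addP]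
    congr 1
    omega

theorem eq_of_siteState_eq_active {h : ℤ} {ins : Instr} {m : ℕ} (h₀ : 0 ≤ h)
    (hs : siteState h ins = .active (m + 1)) : h = m + 1 ∧ ¬(ins = .sleep ∧ h = 1) := by
  unfold siteState at hs
  split_ifs at hs with hsl
  injection hs with hs
  exact ⟨by omega, hsl⟩

/-- The invariant of legal toppling from the all-active configuration `σ`: the configuration is
read off from the odometer. -/
def IsConfigOfOdometer (instr : ℤ → ℕ → Instr) (σ : ℤ → ℕ) (c : ℤ → SiteState)
    (w : ℤ → ℕ) : Prop :=
  ∀ v, c v = siteState (height instr σ w v) (instr v (w v)) ∧ 0 ≤ height instr σ w v ∧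
    (instr v (w v) = .sleep → 1 ≤ height instr σ w v)

theorem isConfigOfOdometer_initial (hinstr₀ : ∀ v, instr v 0 = .left) :
    IsConfigOfOdometer instr σ (fun v => .active (σ v)) 0 := by
  intro v
  simp [height, siteState, Lcount, Rcount, hinstr₀]

theorem applyInstr_of_ne (c : ℤ → SiteState) {v₀ v : ℤ} (ins : Instr) (hv : v ≠ v₀) :
    applyInstr c v₀ ins v =
      if (ins = .left ∧ v + 1 = v₀) ∨ (ins = .right ∧ v - 1 = v₀) then addP (c v) else c v := by
  have : v = v₀ - 1 ↔ v + 1 = v₀ := by omega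
  have : v = v₀ + 1 ↔ v - 1 = v₀ := by omega
  cases ins <;> simp_all [applyInstr]

theorem height_update_add_one_of_ne (w : ℤ → ℕ) {v₀ v : ℤ} (hv : v ≠ v₀) :
    height instr σ (update w v₀ (w v₀ + 1)) v = height instr σ w v +
      if (instr v₀ (w v₀ + 1) = .left ∧ v + 1 = v₀) ∨ (instr v₀ (w v₀ + 1) = .right ∧ v - 1 = v₀)
      then 1 else 0 := by
  rw [height_update_add_one]
  cases instr v₀ (w v₀ + 1) <;> simp [hv, and_comm]

theorem IsConfigOfOdometer.topple {c : ℤ → SiteState} {w : ℤ → ℕ} {v₀ : ℤ} {m : ℕ}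
    (hc : IsConfigOfOdometer instr σ c w) (hv₀ : c v₀ = .active (m + 1)) :
    IsConfigOfOdometer instr σ (applyInstr c v₀ (instr v₀ (w v₀ + 1)))
      (update w v₀ (w v₀ + 1)) := by
  obtain ⟨hh, hsl⟩ := eq_of_siteState_eq_active (hc v₀).2.1 ((hc v₀).1 ▸ hv₀)
  intro v
  rcases eq_or_ne v v₀ with rfl | hv
  · rw [height_update_add_one, update_self]
    cases instr v (w v + 1) <;>
      simp [applyInstr, hv₀, hh, siteState, removeP, Int.le_add_one, Nat.cast_nonneg]
  · obtain ⟨hcv, h₀, hs⟩ := hc v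
    rw [applyInstr_of_ne c _ hv, height_update_add_one_of_ne w hv, update_of_ne hv]
    split_ifs
    · rw [hcv, addP_siteState h₀ hs]
      exact ⟨rfl, by omega, fun h => by have := hs h; omega⟩
    · simpa using ⟨hcv, h₀, hs⟩

theorem IsConfigOfOdometer.lt_of_weaklyStableAt {c : ℤ → SiteState} {w u : ℤ → ℕ} {v : ℤ}
    {m : ℕ} (hc : IsConfigOfOdometer instr σ c w) (hv : c v = .active (m + 1)) (hle : w ≤ u)
    (hws : WeaklyStableAt instr σ u v) : w v < u v := by
  -- if `w v = u v`, site `v` would hold at most `height u v ≤ 1` particles, asleep if only one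
  refine (hle v).lt_of_ne fun heq => ?_
  obtain ⟨hh, hsl⟩ := eq_of_siteState_eq_active (hc v).2.1 ((hc v).1 ▸ hv)
  have := height_le_height_of_le_of_eq (instr := instr) (σ := σ) hle heq
  obtain ⟨h01, hsleep⟩ := hws
  exact hsl ⟨heq ▸ hsleep (by omega), by omega⟩

theorem run_snd_le {u : ℤ → ℕ} {l : List ℤ} (hws : ∀ v ∈ l, WeaklyStableAt instr σ u v)
    {c : ℤ → SiteState} {w : ℤ → ℕ} (hc : IsConfigOfOdometer instr σ c w) (hle : w ≤ u)
    (hlegal : Legal instr l (c, w)) : (run instr l (c, w)).2 ≤ u := by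
  induction l generalizing c w with
  | nil => exact hle
  | cons v₀ l ih =>
    obtain ⟨⟨m, hv₀⟩, hlegal⟩ := hlegal
    have hlt := hc.lt_of_weaklyStableAt hv₀ hle (hws v₀ List.mem_cons_self)
    have hle' : update w v₀ (w v₀ + 1) ≤ u :=
      update_le_iff.2 ⟨hlt, fun v _ => hle v⟩
    exact ih (fun v hv => hws v (List.mem_cons_of_mem _ hv)) (hc.topple hv₀) hle' hlegal

end Odometer

theorem run_snd_apply_of_notMem (instr : ℤ → ℕ → Instr) {l : List ℤ} {v : ℤ} (hv : v ∉ l)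
    (p : (ℤ → SiteState) × (ℤ → ℕ)) : (run instr l p).2 v = p.2 v := by
  induction l generalizing p with
  | nil => rfl
  | cons v₀ l ih =>
    rw [List.mem_cons, not_or] at hv
    rw [run, ih hv.2]
    exact update_of_ne hv.1 _ _

theorem true_odometer_leaves_most_particles_general (instr : ℤ → ℕ → Instr)
    (hinstr0 : ∀ v, instr v 0 = Instr.left)
    (σ : ℤ → ℕ) (a b : ℤ) (hab : a ≤ b)
    (u' : ℤ → ℕ) (hsupp : ∀ v : ℤ, v ∉ Finset.Icc a b → u' v = 0)
    (hws : ∀ v ∈ Finset.Icc a b, WeaklyStableAt instr σ u' v)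
    (l : List ℤ) (hl : ∀ v ∈ l, v ∈ Finset.Icc a b)
    (hlegal : Legal instr l (fun v => SiteState.active (σ v), fun _ => 0)) :
    (∑ v ∈ Finset.Icc a b, height instr σ u' v) =
        (∑ v ∈ Finset.Icc a b, (σ v : ℤ)) - (Lcount instr u' a : ℤ)
          - (Rcount instr u' b : ℤ) ∧
    (∑ v ∈ Finset.Icc a b, height instr σ u' v) ≤
        ∑ v ∈ Finset.Icc a b,
          height instr σ (run instr l (fun v => SiteState.active (σ v), fun _ => 0)).2 v := by
  set u := (run instr l (fun v => SiteState.active (σ v), fun _ => 0)).2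
  have hsupp_u : ∀ v, v ∉ Icc a b → u v = 0 := fun v hv =>
    run_snd_apply_of_notMem instr (fun h => hv (hl v h)) _
  have hle : u ≤ u' := run_snd_le (fun v hv => hws v (hl v hv))
    (isConfigOfOdometer_initial hinstr0) (fun v => Nat.zero_le _) hlegal
  have hLa := Lcount_mono (instr := instr) (hle a)
  have hRb := Rcount_mono (instr := instr) (hle b)
  rw [sum_height_Icc hab hsupp, sum_height_Icc hab hsupp_u]
  exact ⟨rfl, by omega⟩

/-- Lemma 2.4 (`lem:dual.lap`): if `u'` is an odometer supported on `[a,b]`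
and weakly stable on `[a,b]` for an initial configuration `σ` with no sleeping
particles, then the number of particles it leaves on `[a,b]`, namely
`∑_{v=a}^{b} h(v)`, equals `∑_{v=a}^{b} |σ v| − L_{u'}(a) − R_{u'}(b)`; moreover
the true odometer stabilizing `[a,b]` (the odometer of any legal toppling
sequence within `[a,b]` stabilizing `[a,b]`) leaves at least as many particles
on `[a,b]` as `u'` does. -/
theorem true_odometer_leaves_most_particles (instr : ℤ → ℕ → Instr)
    (hinstr0 : ∀ v, instr v 0 = Instr.left)
    (σ : ℤ → ℕ) (a b : ℤ) (hab : a ≤ b)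
    (u' : ℤ → ℕ) (hsupp : ∀ v : ℤ, v ∉ Finset.Icc a b → u' v = 0)
    (hws : ∀ v ∈ Finset.Icc a b, WeaklyStableAt instr σ u' v)
    (l : List ℤ) (hl : ∀ v ∈ l, v ∈ Finset.Icc a b)
    (hlegal : Legal instr l (fun v => SiteState.active (σ v), fun _ => 0))
    (hstab : StableOn (run instr l (fun v => SiteState.active (σ v), fun _ => 0)).1
      (Finset.Icc a b)) :
    (∑ v ∈ Finset.Icc a b, height instr σ u' v) =
        (∑ v ∈ Finset.Icc a b, (σ v : ℤ)) - (Lcount instr u' a : ℤ)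
          - (Rcount instr u' b : ℤ) ∧
    (∑ v ∈ Finset.Icc a b, height instr σ u' v) ≤
        ∑ v ∈ Finset.Icc a b,
          height instr σ (run instr l (fun v => SiteState.active (σ v), fun _ => 0)).2 v :=
  true_odometer_leaves_most_particles_general instr hinstr0 σ a b hab u' hsupp hws l hl hlegal
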